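/- Let e₁ and e₂ be real numbers with 0 < e₂ < e₁ < 1, and set k = e₂/e₁, k' = √(1 − k²), and φ = arcsin e₁. Then ∫_{e₂}^{e₁} E( arcsin( (e₁/q)·√((q² − e₂²)/(e₁² − e₂²)) ), k' ) / (1 − q²) dq = E(k') · arctanh e₁ − (π/2)·e₂ − (π/2)·[ F(φ, k) − E(φ, k) ]. -/

import Mathlib

open Real intervalIntegral

/-- Incomplete elliptic integral of the first kind `F(φ, k)`. -/
noncomputable def ellipticF (φ k : ℝ) : ℝ :=
  ∫ θ in (0:ℝ)..φ, (1 - k ^ 2 * Real.sin θ ^ 2) ^ (-(1:ℝ)/2)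

/-- Incomplete elliptic integral of the second kind `E(φ, k)`. -/
noncomputable def ellipticE (φ k : ℝ) : ℝ :=
  ∫ θ in (0:ℝ)..φ, (1 - k ^ 2 * Real.sin θ ^ 2) ^ ((1:ℝ)/2)

/-- Complete elliptic integral of the first kind `K(k)`. -/
noncomputable def completeK (k : ℝ) : ℝ := ellipticF (Real.pi / 2) k

/-- Complete elliptic integral of the second kind `E(k)`. -/
noncomputable def completeE (k : ℝ) : ℝ := ellipticE (Real.pi / 2) k

/-- Inverse hyperbolic tangent. -/
noncomputable def arctanh (x : ℝ) : ℝ := Real.log ((1 + x) / (1 - x)) / 2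


open Real intervalIntegral MeasureTheory

set_option maxHeartbeats 1000000


set_option maxHeartbeats 1000000




lemma arctanh_zero : arctanh 0 = 0 := by simp [arctanh]

lemma hasDerivAt_arctanh {x : ℝ} (h1 : -1 < x) (h2 : x < 1) :
    HasDerivAt arctanh (1 / (1 - x ^ 2)) x := by
  have hx1 : (0:ℝ) < 1 + x := by linarith
  have hx2 : (0:ℝ) < 1 - x := by linarith
  have hq : HasDerivAt (fun y : ℝ => (1 + y) / (1 - y)) (2 / (1 - x) ^ 2) x := by
    have h := (HasDerivAt.const_add 1 (hasDerivAt_id x)).div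
      ((hasDerivAt_id x).const_sub 1) hx2.ne'
    refine h.congr_deriv (Eq.symm ?_)
    simp only [id_eq]
    field_simp
    ring
  have hpos : (0:ℝ) < (1 + x) / (1 - x) := div_pos hx1 hx2
  have hlog := (Real.hasDerivAt_log hpos.ne').comp x hq
  have := hlog.div_const 2
  have h3 : 1 - x ^ 2 ≠ 0 := by nlinarith
  refine this.congr_deriv (Eq.symm ?_)
  field_simp
  ring




lemma primitive_hasDerivAt {f : ℝ → ℝ} (hf : Continuous f) (x : ℝ) :
    HasDerivAt (fun y => ∫ t in (0:ℝ)..y, f t) (f x) x :=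
  intervalIntegral.integral_hasDerivAt_right (hf.intervalIntegrable _ _)
    (hf.stronglyMeasurable.stronglyMeasurableAtFilter) hf.continuousAt

lemma primitive_continuous {f : ℝ → ℝ} (hf : Continuous f) :
    Continuous (fun y => ∫ t in (0:ℝ)..y, f t) :=
  intervalIntegral.continuous_primitive (fun _ _ => hf.intervalIntegrable _ _) 0

lemma base_pos {k : ℝ} (hk2 : k ^ 2 < 1) (t : ℝ) : 0 < 1 - k ^ 2 * Real.sin t ^ 2 := by
  nlinarith [Real.sin_sq_le_one t, sq_nonneg (k * Real.sin t)]

lemma cont_rpow_base {k : ℝ} (e : ℝ) (hk2 : k ^ 2 < 1) :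
    Continuous fun t : ℝ => (1 - k ^ 2 * Real.sin t ^ 2) ^ e := by
  rw [continuous_iff_continuousAt]
  intro t
  have hg : ContinuousAt (fun t : ℝ => 1 - k ^ 2 * Real.sin t ^ 2) t := by fun_prop
  show ContinuousAt ((fun x : ℝ => x ^ e) ∘ (fun t : ℝ => 1 - k ^ 2 * Real.sin t ^ 2)) t
  exact ContinuousAt.comp (Real.continuousAt_rpow_const _ e (Or.inl (base_pos hk2 t).ne')) hg

lemma hasDerivAt_ellipticE {k : ℝ} (hk2 : k ^ 2 < 1) (φ : ℝ) :
    HasDerivAt (fun φ => ellipticE φ k) ((1 - k ^ 2 * Real.sin φ ^ 2) ^ ((1:ℝ)/2)) φ :=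
  primitive_hasDerivAt (cont_rpow_base _ hk2) φ

lemma hasDerivAt_ellipticF {k : ℝ} (hk2 : k ^ 2 < 1) (φ : ℝ) :
    HasDerivAt (fun φ => ellipticF φ k) ((1 - k ^ 2 * Real.sin φ ^ 2) ^ (-(1:ℝ)/2)) φ :=
  primitive_hasDerivAt (cont_rpow_base _ hk2) φ

lemma continuous_ellipticE (k : ℝ) (hk2 : k ^ 2 < 1) : Continuous (fun φ => ellipticE φ k) :=
  primitive_continuous (cont_rpow_base _ hk2)

lemma rpow_half_eq_sqrt {y : ℝ} (_hy : 0 ≤ y) : y ^ ((1:ℝ)/2) = Real.sqrt y := by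
  rw [Real.sqrt_eq_rpow]

lemma rpow_neg_half_eq_sqrt {y : ℝ} (hy : 0 ≤ y) : y ^ (-(1:ℝ)/2) = (Real.sqrt y)⁻¹ := by
  rw [show (-(1:ℝ)/2) = -(1/2) by norm_num, Real.rpow_neg hy, Real.sqrt_eq_rpow]


lemma integral_inv_sub_mul_sin_sq {c m : ℝ} (hm : 0 < m) (hmc : m < c) :
    ∫ θ in (0:ℝ)..(π/2), (c - m * Real.sin θ ^ 2)⁻¹
      = π / 2 / Real.sqrt (c * (c - m)) := by
  have hc : 0 < c := hm.trans hmc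
  set b : ℝ := Real.sqrt ((c - m) / c) with hbdef
  have hbpos : 0 < b := Real.sqrt_pos.2 (div_pos (by linarith) hc)
  have hb2 : b ^ 2 = (c - m) / c := Real.sq_sqrt (le_of_lt (div_pos (by linarith) hc))
  have hm' : m = c - b ^ 2 * c := by
    rw [hb2]; field_simp; ring
  have hbc : Real.sqrt (c * (c - m)) = b * c := by
    rw [hbdef, show c * (c - m) = ((c - m)/c) * c^2 by field_simp,
      Real.sqrt_mul (le_of_lt (div_pos (by linarith) hc)), Real.sqrt_sq hc.le]
  set F : ℝ → ℝ := fun θ =>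
    (θ + Real.arctan ((b - 1) * Real.sin θ * Real.cos θ
        / (Real.cos θ ^ 2 + b * Real.sin θ ^ 2))) / (b * c) with hF
  have hderiv : ∀ θ : ℝ, HasDerivAt F ((c - m * Real.sin θ ^ 2)⁻¹) θ := by
    intro θ
    have hv : 0 < Real.cos θ ^ 2 + b * Real.sin θ ^ 2 := by
      nlinarith [Real.sin_sq_add_cos_sq θ, sq_nonneg (Real.sin θ), sq_nonneg (Real.cos θ)]
    have hden : 0 < c - m * Real.sin θ ^ 2 := by
      nlinarith [Real.sin_sq_le_one θ, sq_nonneg (Real.sin θ)]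
    have hu : HasDerivAt (fun θ : ℝ => (b - 1) * Real.sin θ * Real.cos θ)
        ((b - 1) * (Real.cos θ ^ 2 - Real.sin θ ^ 2)) θ := by
      have := ((Real.hasDerivAt_sin θ).const_mul (b - 1)).mul (Real.hasDerivAt_cos θ)
      refine this.congr_deriv (Eq.symm ?_)
      ring
    have hvd : HasDerivAt (fun θ : ℝ => Real.cos θ ^ 2 + b * Real.sin θ ^ 2)
        (2 * (b - 1) * Real.sin θ * Real.cos θ) θ := by
      have h1 := (Real.hasDerivAt_cos θ).pow 2
      have h2 := ((Real.hasDerivAt_sin θ).pow 2).const_mul b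
      refine (h1.add h2).congr_deriv (Eq.symm ?_)
      ring
    have hg := hu.div hvd hv.ne'
    have harct := hg.arctan
    have hsum := (hasDerivAt_id θ).add harct
    have hfin := hsum.div_const (b * c)
    refine hfin.congr_deriv (Eq.symm ?_)
    rw [eq_div_iff (by positivity)]
    have hvne : (Real.cos θ ^ 2 + b * Real.sin θ ^ 2) ≠ 0 := hv.ne'
    have hcs : Real.cos θ ^ 2 = 1 - Real.sin θ ^ 2 := Real.cos_sq' θ
    simp only [Pi.div_apply]
    set s := Real.sin θ with hsdef
    rw [div_pow, show ((b - 1) * s * Real.cos θ) ^ 2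
        = (b - 1) ^ 2 * s ^ 2 * Real.cos θ ^ 2 from by ring]
    rw [show (b - 1) * s * Real.cos θ * (2 * (b - 1) * s * Real.cos θ)
        = 2 * (b - 1) ^ 2 * s ^ 2 * Real.cos θ ^ 2 from by ring]
    simp only [hcs]
    have hs1 : s ^ 2 ≤ 1 := Real.sin_sq_le_one θ
    have hv' : (0:ℝ) < 1 - s ^ 2 + b * s ^ 2 := by
      have := hv; rw [hcs] at this; linarith
    have hden' : (0:ℝ) < c - m * s ^ 2 := hden
    have hquadnum : (0:ℝ) ≤ (b - 1) ^ 2 * s ^ 2 * (1 - s ^ 2) := by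
      have := sq_nonneg ((b-1)*s)
      nlinarith
    have hquad : (0:ℝ) < 1 + (b - 1) ^ 2 * s ^ 2 * (1 - s ^ 2) / (1 - s ^ 2 + b * s ^ 2) ^ 2 := by
      have := div_nonneg hquadnum (sq_nonneg (1 - s ^ 2 + b * s ^ 2))
      linarith
    rw [hm']
    rw [hm'] at hden'
    have hD3 : (0:ℝ) < 1 + b ^ 2 * s ^ 2 - s ^ 2 := by
      rcases le_total (b ^ 2) 1 with h | h
      · nlinarith [mul_nonneg (sub_nonneg.2 hs1) (sub_nonneg.2 h), pow_pos hbpos 2]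
      · nlinarith [mul_nonneg (sq_nonneg s) (sub_nonneg.2 h)]
    have hD4 : (1:ℝ) - s ^ 2 + b ^ 2 * s ^ 2 ≠ 0 := by linarith
    have hD5 := hD3.ne'
    field_simp
    ring_nf
    field_simp
    ring
  have hcont : Continuous fun θ : ℝ => (c - m * Real.sin θ ^ 2)⁻¹ := by
    apply Continuous.inv₀
    · exact continuous_const.sub (continuous_const.mul (Real.continuous_sin.pow 2))
    · intro θ
      have := Real.sin_sq_le_one θ
      have := sq_nonneg (Real.sin θ)
      nlinarith
  rw [intervalIntegral.integral_eq_sub_of_hasDerivAt (fun θ _ => hderiv θ)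
    (hcont.intervalIntegrable _ _), hbc]
  have hFb : F (π/2) = (π/2) / (b * c) := by
    simp [hF, Real.sin_pi_div_two, Real.cos_pi_div_two]
  have hFa : F 0 = 0 := by simp [hF]
  rw [hFb, hFa]
  ring

lemma lemB {k x : ℝ} (hk0 : 0 < k) (hk1 : k < 1) (hx0 : 0 < x) (hx1 : x < 1) :
    ∫ t in (0:ℝ)..(π/2),
      arctanh (k * x / Real.sqrt (1 - (1 - k ^ 2) * Real.sin t ^ 2))
        * Real.sqrt (1 - (1 - k ^ 2) * Real.sin t ^ 2)
      = π / 2 * (k * x)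
        + π / 2 * (ellipticF (Real.arcsin x) k - ellipticE (Real.arcsin x) k) := by
  have hk2 : k ^ 2 < 1 := by nlinarith
  have hxle : (0:ℝ) ≤ x := hx0.le
  have hbase : ∀ t : ℝ, k ^ 2 ≤ 1 - (1 - k ^ 2) * Real.sin t ^ 2 := by
    intro t
    nlinarith [Real.sin_sq_le_one t, sq_nonneg (Real.sin t)]
  have hbasepos : ∀ t : ℝ, 0 < 1 - (1 - k ^ 2) * Real.sin t ^ 2 := by
    intro t; nlinarith [hbase t]
  have hΔpos : ∀ t : ℝ, 0 < Real.sqrt (1 - (1 - k ^ 2) * Real.sin t ^ 2) :=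
    fun t => Real.sqrt_pos.2 (hbasepos t)
  have hΔsq : ∀ t : ℝ, Real.sqrt (1 - (1 - k ^ 2) * Real.sin t ^ 2) ^ 2
      = 1 - (1 - k ^ 2) * Real.sin t ^ 2 := fun t => Real.sq_sqrt (hbasepos t).le
  have hkΔ : ∀ t : ℝ, k ≤ Real.sqrt (1 - (1 - k ^ 2) * Real.sin t ^ 2) := by
    intro t
    have h := Real.sqrt_le_sqrt (hbase t)
    rwa [Real.sqrt_sq hk0.le] at h
  set f : ℝ → ℝ → ℝ := fun t u =>
    k + k ^ 3 * u ^ 2 * (1 - (1 - k ^ 2) * Real.sin t ^ 2 - k ^ 2 * u ^ 2)⁻¹ with hfdef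
  have hD : ∀ t u : ℝ, u ∈ Set.Icc (0:ℝ) x →
      0 < 1 - (1 - k ^ 2) * Real.sin t ^ 2 - k ^ 2 * u ^ 2 := by
    intro t u hu
    have h1 : u ^ 2 ≤ x ^ 2 := by nlinarith [hu.1, hu.2]
    have hu2 : u ^ 2 < 1 := lt_of_le_of_lt h1 (by nlinarith)
    nlinarith [hbase t, mul_pos (pow_pos hk0 2) (sub_pos.2 hu2)]
  -- Step B1 : inner FTC in u
  have hB1 : ∀ t : ℝ, (∫ u in (0:ℝ)..x, f t u)
      = arctanh (k * x / Real.sqrt (1 - (1 - k ^ 2) * Real.sin t ^ 2))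
        * Real.sqrt (1 - (1 - k ^ 2) * Real.sin t ^ 2) := by
    intro t
    set Δ : ℝ := Real.sqrt (1 - (1 - k ^ 2) * Real.sin t ^ 2) with hΔdef
    have hΔ0 : 0 < Δ := hΔpos t
    have hderiv : ∀ u ∈ Set.uIcc (0:ℝ) x,
        HasDerivAt (fun u => arctanh (k * u / Δ) * Δ) (f t u) u := by
      intro u hu
      rw [Set.uIcc_of_le hxle] at hu
      have hDu := hD t u hu
      have hratio0 : 0 ≤ k * u / Δ := div_nonneg (mul_nonneg hk0.le hu.1) hΔ0.le
      have harg1 : -1 < k * u / Δ := by linarith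
      have harg2 : k * u / Δ < 1 := by
        rw [div_lt_one hΔ0]
        calc k * u ≤ k * x := by nlinarith [hu.1, hu.2]
        _ < k * 1 := by nlinarith
        _ ≤ Δ := by rw [mul_one]; exact hkΔ t
      have hlin : HasDerivAt (fun u : ℝ => k * u / Δ) (k / Δ) u := by
        have := ((hasDerivAt_id u).const_mul k).div_const Δ
        refine this.congr_deriv (Eq.symm ?_)
        ring
      have hat := (hasDerivAt_arctanh harg1 harg2).comp u hlin
      have := hat.mul_const Δ
      refine this.congr_deriv (Eq.symm ?_)
      have hratio1 : (k * u / Δ) ^ 2 < 1 := by nlinarith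
      have hne1 : (1 : ℝ) - (k * u / Δ) ^ 2 ≠ 0 := by nlinarith
      have hΔsq' : Δ ^ 2 = 1 - (1 - k ^ 2) * Real.sin t ^ 2 := hΔsq t
      have hDu' : 0 < Δ ^ 2 - k ^ 2 * u ^ 2 := by rw [hΔsq']; linarith
      rw [hfdef]
      simp only
      rw [← hΔsq']
      rw [div_pow]
      field_simp
      ring
    have hcont : ContinuousOn (fun u => f t u) (Set.uIcc (0:ℝ) x) := by
      rw [Set.uIcc_of_le hxle]
      apply ContinuousOn.add continuousOn_const
      apply ContinuousOn.mul (by fun_prop)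
      apply ContinuousOn.inv₀ (by fun_prop)
      intro u hu
      exact (hD t u hu).ne'
    rw [intervalIntegral.integral_eq_sub_of_hasDerivAt hderiv
      (hcont.intervalIntegrable)]
    simp [arctanh_zero]
  -- rewrite the integrand using hB1
  rw [intervalIntegral.integral_congr
    (g := fun t => ∫ u in (0:ℝ)..x, f t u) (fun t _ => (hB1 t).symm)]
  -- Step B2 : Fubini
  have hπ : (0:ℝ) ≤ π / 2 := by positivity
  have hswap : (∫ t in (0:ℝ)..(π/2), ∫ u in (0:ℝ)..x, f t u)
      = ∫ u in (0:ℝ)..x, ∫ t in (0:ℝ)..(π/2), f t u := by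
    rw [intervalIntegral.integral_of_le hπ, intervalIntegral.integral_of_le hxle]
    simp_rw [intervalIntegral.integral_of_le hxle, intervalIntegral.integral_of_le hπ]
    apply MeasureTheory.integral_integral_swap
    rw [Measure.prod_restrict]
    have hcomp : IsCompact (Set.Icc (0:ℝ) (π/2) ×ˢ Set.Icc (0:ℝ) x) :=
      isCompact_Icc.prod isCompact_Icc
    have hcontOn : ContinuousOn (Function.uncurry f)
        (Set.Icc (0:ℝ) (π/2) ×ˢ Set.Icc (0:ℝ) x) := by
      apply ContinuousOn.add continuousOn_const
      apply ContinuousOn.mul (by fun_prop)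
      apply ContinuousOn.inv₀ (by fun_prop)
      rintro ⟨t, u⟩ hp
      exact (hD t u hp.2).ne'
    exact (hcontOn.integrableOn_compact hcomp).mono_set
      (Set.prod_mono Set.Ioc_subset_Icc_self Set.Ioc_subset_Icc_self)
  rw [hswap]
  -- Step B3 : evaluate inner integral
  have hinner : ∀ u ∈ Set.uIcc (0:ℝ) x,
      (∫ t in (0:ℝ)..(π/2), f t u)
        = π / 2 * k + π / 2 * (k ^ 2 * u ^ 2
            / (Real.sqrt (1 - u ^ 2) * Real.sqrt (1 - k ^ 2 * u ^ 2))) := by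
    intro u hu
    rw [Set.uIcc_of_le hxle] at hu
    have hux : u ^ 2 ≤ x ^ 2 := by nlinarith [hu.1, hu.2]
    have hu2 : u ^ 2 < 1 := lt_of_le_of_lt hux (by nlinarith)
    have hk2u : k ^ 2 * u ^ 2 < k ^ 2 := by
      nlinarith [mul_pos (pow_pos hk0 2) (sub_pos.2 hu2)]
    have hc : (0:ℝ) < 1 - k ^ 2 * u ^ 2 := by linarith
    have h1u : (0:ℝ) < 1 - u ^ 2 := by linarith
    have hmm : (0:ℝ) < 1 - k ^ 2 := by linarith
    have hmc : 1 - k ^ 2 < 1 - k ^ 2 * u ^ 2 := by linarith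
    have hrw : ∀ t : ℝ, f t u
        = k + k ^ 3 * u ^ 2 * ((1 - k ^ 2 * u ^ 2) - (1 - k ^ 2) * Real.sin t ^ 2)⁻¹ := by
      intro t
      rw [hfdef]
      simp only
      ring_nf
    simp_rw [hrw]
    rw [intervalIntegral.integral_add (intervalIntegrable_const)]
    · rw [intervalIntegral.integral_const_mul, integral_inv_sub_mul_sin_sq hmm hmc]
      rw [intervalIntegral.integral_const, smul_eq_mul]
      have hsq : Real.sqrt ((1 - k ^ 2 * u ^ 2) * ((1 - k ^ 2 * u ^ 2) - (1 - k ^ 2)))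
          = Real.sqrt (1 - k ^ 2 * u ^ 2) * (k * Real.sqrt (1 - u ^ 2)) := by
        rw [show (1 - k ^ 2 * u ^ 2) * ((1 - k ^ 2 * u ^ 2) - (1 - k ^ 2))
            = (1 - k ^ 2 * u ^ 2) * (k ^ 2 * (1 - u ^ 2)) by ring]
        rw [Real.sqrt_mul hc.le, Real.sqrt_mul (sq_nonneg k), Real.sqrt_sq hk0.le]
      rw [hsq]
      have hs1 : 0 < Real.sqrt (1 - k ^ 2 * u ^ 2) := Real.sqrt_pos.2 hc
      have hs2 : 0 < Real.sqrt (1 - u ^ 2) := Real.sqrt_pos.2 h1u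
      field_simp
      ring
    · apply ContinuousOn.intervalIntegrable
      apply ContinuousOn.mul (by fun_prop)
      apply ContinuousOn.inv₀ (by fun_prop)
      intro t _
      have : (0:ℝ) < (1 - k ^ 2 * u ^ 2) - (1 - k ^ 2) * Real.sin t ^ 2 := by
        nlinarith [Real.sin_sq_le_one t, sq_nonneg (Real.sin t)]
      exact this.ne'
  rw [intervalIntegral.integral_congr hinner]
  -- Step B4 : outer integral
  rw [intervalIntegral.integral_add intervalIntegrable_const]
  · rw [intervalIntegral.integral_const, smul_eq_mul, sub_zero]
    have hB4 : (∫ u in (0:ℝ)..x, π / 2 * (k ^ 2 * u ^ 2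
        / (Real.sqrt (1 - u ^ 2) * Real.sqrt (1 - k ^ 2 * u ^ 2))))
        = π / 2 * (ellipticF (Real.arcsin x) k - ellipticE (Real.arcsin x) k) := by
      rw [intervalIntegral.integral_const_mul]
      congr 1
      have hderiv : ∀ u ∈ Set.uIcc (0:ℝ) x,
          HasDerivAt (fun u => ellipticF (Real.arcsin u) k - ellipticE (Real.arcsin u) k)
            (k ^ 2 * u ^ 2 / (Real.sqrt (1 - u ^ 2) * Real.sqrt (1 - k ^ 2 * u ^ 2))) u := by
        intro u hu
        rw [Set.uIcc_of_le hxle] at hu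
        have hu1 : -1 < u := by linarith [hu.1]
        have hu1' : u < 1 := by linarith [hu.2]
        have harcsin := Real.hasDerivAt_arcsin (by linarith) (by linarith)
        have hF := (hasDerivAt_ellipticF hk2 (Real.arcsin u)).comp u harcsin
        have hE := (hasDerivAt_ellipticE hk2 (Real.arcsin u)).comp u harcsin
        have := hF.sub hE
        refine this.congr_deriv (Eq.symm ?_)
        rw [Real.sin_arcsin (by linarith) (by linarith)]
        have hc : (0:ℝ) < 1 - k ^ 2 * u ^ 2 := by nlinarith
        have h1u : (0:ℝ) < 1 - u ^ 2 := by nlinarith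
        rw [rpow_neg_half_eq_sqrt hc.le, rpow_half_eq_sqrt hc.le]
        have hs1 : 0 < Real.sqrt (1 - k ^ 2 * u ^ 2) := Real.sqrt_pos.2 hc
        have hs2 : 0 < Real.sqrt (1 - u ^ 2) := Real.sqrt_pos.2 h1u
        have hq1 : Real.sqrt (1 - k ^ 2 * u ^ 2) ^ 2 = 1 - k ^ 2 * u ^ 2 :=
          Real.sq_sqrt hc.le
        field_simp
        linear_combination hq1
      have hcont : ContinuousOn
          (fun u => k ^ 2 * u ^ 2 / (Real.sqrt (1 - u ^ 2) * Real.sqrt (1 - k ^ 2 * u ^ 2)))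
          (Set.uIcc (0:ℝ) x) := by
        rw [Set.uIcc_of_le hxle]
        apply ContinuousOn.div (by fun_prop) (by fun_prop)
        intro u hu
        have hu2 : u ^ 2 < 1 := by nlinarith [hu.1, hu.2]
        have hc : (0:ℝ) < 1 - k ^ 2 * u ^ 2 := by nlinarith
        have h1u : (0:ℝ) < 1 - u ^ 2 := by nlinarith
        positivity
      rw [intervalIntegral.integral_eq_sub_of_hasDerivAt hderiv hcont.intervalIntegrable]
      simp [ellipticF, ellipticE, Real.arcsin_zero]
    rw [hB4]
    ring
  · apply ContinuousOn.intervalIntegrable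
    apply ContinuousOn.mul continuousOn_const
    rw [Set.uIcc_of_le hxle]
    apply ContinuousOn.div (by fun_prop) (by fun_prop)
    intro u hu
    have hu2 : u ^ 2 < 1 := by nlinarith [hu.1, hu.2]
    have hc : (0:ℝ) < 1 - k ^ 2 * u ^ 2 := by nlinarith
    have h1u : (0:ℝ) < 1 - u ^ 2 := by nlinarith
    positivity

lemma continuous_arctanh_comp {h : ℝ → ℝ} (hc : Continuous h)
    (hb' : ∀ t, -1 < h t) (hb : ∀ t, h t < 1) :
    Continuous fun t => arctanh (h t) := by
  rw [continuous_iff_continuousAt]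
  intro t
  exact ((hasDerivAt_arctanh (hb' t) (hb t)).continuousAt).comp hc.continuousAt


theorem stmt_17 (e₁ e₂ : ℝ) (h0 : 0 < e₂) (h21 : e₂ < e₁) (h11 : e₁ < 1)
    (k k' φ : ℝ) (hk : k = e₂ / e₁) (hk' : k' = Real.sqrt (1 - k ^ 2))
    (hφ : φ = Real.arcsin e₁) :
    (∫ q in e₂..e₁,
        ellipticE (Real.arcsin (e₁ / q * Real.sqrt ((q ^ 2 - e₂ ^ 2) / (e₁ ^ 2 - e₂ ^ 2)))) k'
          / (1 - q ^ 2))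
      = completeE k' * arctanh e₁ - Real.pi / 2 * e₂
        - Real.pi / 2 * (ellipticF φ k - ellipticE φ k) := by
  have he1 : 0 < e₁ := h0.trans h21
  have hkpos : 0 < k := by rw [hk]; positivity
  have hklt : k < 1 := by rw [hk]; rw [div_lt_one he1]; exact h21
  have hk2 : k ^ 2 < 1 := by nlinarith
  have hE2 : e₂ = k * e₁ := by rw [hk]; field_simp
  have hk'sq : k' ^ 2 = 1 - k ^ 2 := by
    rw [hk']; exact Real.sq_sqrt (by linarith)
  have hk'2lt : k' ^ 2 < 1 := by rw [hk'sq]; nlinarith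
  have hdiff : 0 < e₁ ^ 2 - e₂ ^ 2 := by nlinarith
  -- basics about Δ(t) = √(1 - k'²·sin²t)
  have hbase : ∀ t : ℝ, k ^ 2 ≤ 1 - k' ^ 2 * Real.sin t ^ 2 := by
    intro t
    rw [hk'sq]
    nlinarith [Real.sin_sq_le_one t, sq_nonneg (Real.sin t)]
  have hbasepos : ∀ t : ℝ, 0 < 1 - k' ^ 2 * Real.sin t ^ 2 := by
    intro t; nlinarith [hbase t]
  have hΔpos : ∀ t : ℝ, 0 < Real.sqrt (1 - k' ^ 2 * Real.sin t ^ 2) :=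
    fun t => Real.sqrt_pos.2 (hbasepos t)
  have hkΔ : ∀ t : ℝ, k ≤ Real.sqrt (1 - k' ^ 2 * Real.sin t ^ 2) := by
    intro t
    have h := Real.sqrt_le_sqrt (hbase t)
    rwa [Real.sqrt_sq hkpos.le] at h
  have he2k : e₂ < k := by rw [hE2]; nlinarith
  -- the function inside arcsin
  set c : ℝ → ℝ := fun q => e₁ / q * Real.sqrt ((q ^ 2 - e₂ ^ 2) / (e₁ ^ 2 - e₂ ^ 2))
    with hcdef
  set ψ : ℝ → ℝ := fun q => Real.arcsin (c q) with hψdef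
  set g : ℝ → ℝ := fun t =>
    arctanh (e₂ / Real.sqrt (1 - k' ^ 2 * Real.sin t ^ 2))
      * Real.sqrt (1 - k' ^ 2 * Real.sin t ^ 2) with hgdef
  set J : ℝ → ℝ := fun θ => ∫ t in (0:ℝ)..θ, g t with hJdef
  set A : ℝ → ℝ := fun q => ellipticE (ψ q) k' * arctanh q - J (ψ q) with hAdef
  -- continuity of g
  have hΔcont : Continuous fun t : ℝ => Real.sqrt (1 - k' ^ 2 * Real.sin t ^ 2) := by
    apply Real.continuous_sqrt.comp
    fun_prop
  have hgcont : Continuous g := by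
    rw [hgdef]
    apply Continuous.mul _ hΔcont
    apply continuous_arctanh_comp
    · exact continuous_const.div hΔcont (fun t => (hΔpos t).ne')
    · intro t
      have : 0 ≤ e₂ / Real.sqrt (1 - k' ^ 2 * Real.sin t ^ 2) :=
        div_nonneg h0.le (hΔpos t).le
      linarith
    · intro t
      rw [div_lt_one (hΔpos t)]
      exact lt_of_lt_of_le he2k (hkΔ t)
  -- bounds for c q on [e₂, e₁]
  have hcsq : ∀ q : ℝ, q ∈ Set.Icc e₂ e₁ →
      c q ^ 2 = e₁ ^ 2 * (q ^ 2 - e₂ ^ 2) / (q ^ 2 * (e₁ ^ 2 - e₂ ^ 2)) := by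
    intro q hq
    have hq0 : 0 < q := lt_of_lt_of_le h0 hq.1
    have hrnn : 0 ≤ (q ^ 2 - e₂ ^ 2) / (e₁ ^ 2 - e₂ ^ 2) := by
      apply div_nonneg _ hdiff.le
      nlinarith [hq.1]
    rw [hcdef]
    simp only
    rw [mul_pow, div_pow, Real.sq_sqrt hrnn]
    field_simp
  have hc01 : ∀ q : ℝ, q ∈ Set.Icc e₂ e₁ → 0 ≤ c q ∧ c q ≤ 1 := by
    intro q hq
    have hq0 : 0 < q := lt_of_lt_of_le h0 hq.1
    have hcnn : 0 ≤ c q := mul_nonneg (div_nonneg he1.le hq0.le) (Real.sqrt_nonneg _)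
    refine ⟨hcnn, ?_⟩
    have h1 : c q ^ 2 ≤ 1 := by
      rw [hcsq q hq]
      rw [div_le_one (by positivity)]
      have hqe : q ^ 2 ≤ e₁ ^ 2 := by nlinarith [hq.2, hq0]
      nlinarith [mul_le_mul_of_nonneg_right hqe (sq_nonneg e₂)]
    nlinarith [hcnn, h1]
  -- Δ(ψ q) = e₂ / q
  have hΔψ : ∀ q : ℝ, q ∈ Set.Icc e₂ e₁ →
      1 - k' ^ 2 * Real.sin (ψ q) ^ 2 = e₂ ^ 2 / q ^ 2 := by
    intro q hq
    have hq0 : 0 < q := lt_of_lt_of_le h0 hq.1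
    obtain ⟨hc0, hc1⟩ := hc01 q hq
    rw [hψdef]
    simp only
    rw [Real.sin_arcsin (by linarith) hc1, hcsq q hq, hk'sq]
    field_simp
    linear_combination ((k * e₁ + e₂) * (e₂ ^ 2 - q ^ 2)) * hE2
  have hΔψ' : ∀ q : ℝ, q ∈ Set.Icc e₂ e₁ →
      Real.sqrt (1 - k' ^ 2 * Real.sin (ψ q) ^ 2) = e₂ / q := by
    intro q hq
    have hq0 : 0 < q := lt_of_lt_of_le h0 hq.1
    rw [hΔψ q hq, show e₂ ^ 2 / q ^ 2 = (e₂ / q) ^ 2 by ring,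
      Real.sqrt_sq (by positivity)]
  -- derivative of A on the open interval
  have hAderiv : ∀ q ∈ Set.Ioo e₂ e₁,
      HasDerivAt A (ellipticE (ψ q) k' / (1 - q ^ 2)) q := by
    intro q hq
    have hqIcc : q ∈ Set.Icc e₂ e₁ := ⟨hq.1.le, hq.2.le⟩
    have hq0 : 0 < q := h0.trans hq.1
    have hq1 : q < 1 := hq.2.trans h11
    have hrpos : 0 < (q ^ 2 - e₂ ^ 2) / (e₁ ^ 2 - e₂ ^ 2) :=
      div_pos (by nlinarith [hq.1]) hdiff
    have hr : HasDerivAt (fun q : ℝ => (q ^ 2 - e₂ ^ 2) / (e₁ ^ 2 - e₂ ^ 2))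
        (2 * q / (e₁ ^ 2 - e₂ ^ 2)) q := by
      have := (((hasDerivAt_id q).pow 2).sub_const (e₂ ^ 2)).div_const (e₁ ^ 2 - e₂ ^ 2)
      refine this.congr_deriv (Eq.symm ?_)
      simp
    have hsq := hr.sqrt hrpos.ne'
    have hinv : HasDerivAt (fun q : ℝ => e₁ / q) (e₁ * (-(q ^ 2)⁻¹)) q := by
      have := (hasDerivAt_inv hq0.ne').const_mul e₁
      exact this
    have hcd := hinv.mul hsq
    have hcpos : 0 < c q := by
      rw [hcdef]
      exact mul_pos (div_pos he1 hq0) (Real.sqrt_pos.2 hrpos)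
    have hclt : c q < 1 := by
      have h2 : c q ^ 2 < 1 := by
        rw [hcsq q hqIcc, div_lt_one (by positivity)]
        have hqe : q ^ 2 < e₁ ^ 2 := by nlinarith [hq.2, hq0]
        nlinarith [mul_lt_mul_of_pos_right hqe (by positivity : (0:ℝ) < e₂ ^ 2)]
      nlinarith [hcpos]
    have hψd : HasDerivAt ψ
        ((1 / Real.sqrt (1 - c q ^ 2)) * (e₁ * (-(q ^ 2)⁻¹)
            * Real.sqrt ((q ^ 2 - e₂ ^ 2) / (e₁ ^ 2 - e₂ ^ 2))
          + e₁ / q * (2 * q / (e₁ ^ 2 - e₂ ^ 2)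
              / (2 * Real.sqrt ((q ^ 2 - e₂ ^ 2) / (e₁ ^ 2 - e₂ ^ 2)))))) q := by
      have := (Real.hasDerivAt_arcsin (by linarith : (-1:ℝ) < c q).ne' hclt.ne).comp q hcd
      exact this
    set dψ : ℝ := (1 / Real.sqrt (1 - c q ^ 2)) * (e₁ * (-(q ^ 2)⁻¹)
            * Real.sqrt ((q ^ 2 - e₂ ^ 2) / (e₁ ^ 2 - e₂ ^ 2))
          + e₁ / q * (2 * q / (e₁ ^ 2 - e₂ ^ 2)
              / (2 * Real.sqrt ((q ^ 2 - e₂ ^ 2) / (e₁ ^ 2 - e₂ ^ 2))))) with hdψdef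
    have hEd : HasDerivAt (fun q => ellipticE (ψ q) k')
        ((1 - k' ^ 2 * Real.sin (ψ q) ^ 2) ^ ((1:ℝ)/2) * dψ) q :=
      (hasDerivAt_ellipticE hk'2lt (ψ q)).comp q hψd
    have hJd : HasDerivAt (fun q => J (ψ q)) (g (ψ q) * dψ) q :=
      (primitive_hasDerivAt hgcont (ψ q)).comp q hψd
    have hAt : HasDerivAt arctanh (1 / (1 - q ^ 2)) q :=
      hasDerivAt_arctanh (by linarith) hq1
    have htot := (hEd.mul hAt).sub hJd
    refine htot.congr_deriv (Eq.symm ?_)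
    have hval : (1 - k' ^ 2 * Real.sin (ψ q) ^ 2) ^ ((1:ℝ)/2) = e₂ / q := by
      rw [hΔψ q hqIcc, rpow_half_eq_sqrt (by positivity),
        show e₂ ^ 2 / q ^ 2 = (e₂ / q) ^ 2 by ring, Real.sqrt_sq (by positivity)]
    have hgval : g (ψ q) = arctanh q * (e₂ / q) := by
      rw [hgdef]
      simp only
      rw [hΔψ' q hqIcc, show e₂ / (e₂ / q) = q by field_simp]
    rw [hval, hgval]
    field_simp
    ring
  -- continuity of A
  have hccont : ContinuousOn c (Set.Icc e₂ e₁) := by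
    rw [hcdef]
    apply ContinuousOn.mul
    · exact continuousOn_const.div continuousOn_id
        (fun q hq => (lt_of_lt_of_le h0 hq.1).ne')
    · exact (Real.continuous_sqrt.comp (by fun_prop)).continuousOn
  have hψcont : ContinuousOn ψ (Set.Icc e₂ e₁) :=
    Real.continuous_arcsin.comp_continuousOn hccont
  have hEprimcont : Continuous (fun φ => ellipticE φ k') := continuous_ellipticE k' hk'2lt
  have hJcont : Continuous J := primitive_continuous hgcont
  have harcOn : ContinuousOn arctanh (Set.Icc e₂ e₁) := by
    intro q hq
    have h1 : -1 < q := by linarith [hq.1]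
    have h2 : q < 1 := lt_of_le_of_lt hq.2 h11
    exact (hasDerivAt_arctanh h1 h2).continuousAt.continuousWithinAt
  have hAcont : ContinuousOn A (Set.Icc e₂ e₁) :=
    ((hEprimcont.comp_continuousOn hψcont).mul harcOn).sub
      (hJcont.comp_continuousOn hψcont)
  have hintI : IntervalIntegrable (fun q => ellipticE (ψ q) k' / (1 - q ^ 2))
      MeasureTheory.volume e₂ e₁ := by
    apply ContinuousOn.intervalIntegrable
    rw [Set.uIcc_of_le h21.le]
    apply ContinuousOn.div (hEprimcont.comp_continuousOn hψcont) (by fun_prop)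
    intro q hq
    have hq0 : 0 < q := lt_of_lt_of_le h0 hq.1
    have hq1 : q ≤ e₁ := hq.2
    have : q ^ 2 < 1 := by nlinarith
    nlinarith
  have hFTC : (∫ q in e₂..e₁, ellipticE (ψ q) k' / (1 - q ^ 2)) = A e₁ - A e₂ :=
    intervalIntegral.integral_eq_sub_of_hasDerivAt_of_le h21.le hAcont hAderiv hintI
  -- endpoint values
  have hce₂ : c e₂ = 0 := by
    rw [hcdef]
    simp only
    rw [sub_self, zero_div, Real.sqrt_zero, mul_zero]
  have hce₁ : c e₁ = 1 := by
    rw [hcdef]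
    simp only
    rw [div_self hdiff.ne', Real.sqrt_one, div_self he1.ne', one_mul]
  have hψe₂ : ψ e₂ = 0 := by rw [hψdef]; simp only; rw [hce₂, Real.arcsin_zero]
  have hψe₁ : ψ e₁ = π / 2 := by rw [hψdef]; simp only; rw [hce₁, Real.arcsin_one]
  have hAe₂ : A e₂ = 0 := by
    rw [hAdef]
    simp only
    rw [hψe₂, hJdef]
    simp only
    rw [intervalIntegral.integral_same]
    have : ellipticE 0 k' = 0 := by
      rw [ellipticE, intervalIntegral.integral_same]
    rw [this]
    ring
  have hJπ : J (π / 2) = π / 2 * (k * e₁)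
      + π / 2 * (ellipticF (Real.arcsin e₁) k - ellipticE (Real.arcsin e₁) k) := by
    have hcongr : J (π / 2) = ∫ t in (0:ℝ)..(π/2),
        arctanh (k * e₁ / Real.sqrt (1 - (1 - k ^ 2) * Real.sin t ^ 2))
          * Real.sqrt (1 - (1 - k ^ 2) * Real.sin t ^ 2) := by
      rw [hJdef]
      apply intervalIntegral.integral_congr
      intro t _
      rw [hgdef]
      simp only
      rw [hk'sq, hE2]
    rw [hcongr]
    exact lemB hkpos hklt he1 h11
  have hgoal' : (∫ q in e₂..e₁,
      ellipticE (Real.arcsin (e₁ / q * Real.sqrt ((q ^ 2 - e₂ ^ 2) / (e₁ ^ 2 - e₂ ^ 2)))) k'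
        / (1 - q ^ 2)) = A e₁ - A e₂ := hFTC
  rw [hgoal', hAe₂, hAdef]
  simp only
  rw [hψe₁, hJπ, hφ, hE2]
  rw [completeE]
  ring
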